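/- arXiv:2208.11200 — 5 statements merged into one kernel-verified Lean document; each statement's English description precedes it below -/
import Mathlib

section
/- Uniqueness of FirmCore: for every integer k ≥ 0 and integer λ with 1 ≤ λ ≤ |L|, if S₁ and S₂ are both maximal (under set inclusion) subsets of V satisfying the (k,λ)-FirmCore property, then S₁ = S₂. (Equivalently: if S₁ and S₂ both satisfy the (k,λ)-FirmCore property, then so does S₁ ∪ S₂; hence the maximal such set is unique.) -/
/-
The FirmCore property is closed under union: enlarging a set can only raise induced degrees,
so every vertex of `S₁ ∪ S₂` keeps the `λ` good layers it had in `S₁` or in `S₂`. Hence two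
maximal sets both equal their union.
-/

open Finset

/-- Degree of `v` in the subgraph of layer `ℓ` induced by the vertex set `S`. -/
def degS {V L : Type*} (G : L → SimpleGraph V) [∀ ℓ, DecidableRel (G ℓ).Adj]
    (S : Finset V) (ℓ : L) (v : V) : ℕ :=
  (S.filter fun u => (G ℓ).Adj v u).card

/-- `S` satisfies the `(k,λ)`-FirmCore property: every vertex of `S` has, in at least
`λ` layers, at least `k` neighbors inside `S`. -/
def FCProp {V L : Type*} [Fintype L] (G : L → SimpleGraph V)
    [∀ ℓ, DecidableRel (G ℓ).Adj] (k lam : ℕ) (S : Finset V) : Prop :=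
  ∀ v ∈ S, lam ≤ (univ.filter fun ℓ : L => k ≤ degS G S ℓ v).card

/-- `C` is the `(k,λ)`-FirmCore: it satisfies the FirmCore property and is maximal
(under set inclusion) among such sets. -/
def IsFirmCore {V L : Type*} [Fintype L] (G : L → SimpleGraph V)
    [∀ ℓ, DecidableRel (G ℓ).Adj] (k lam : ℕ) (C : Finset V) : Prop :=
  FCProp G k lam C ∧ ∀ S : Finset V, FCProp G k lam S → C ⊆ S → S = C

section

variable {V L : Type*} {G : L → SimpleGraph V} [∀ ℓ, DecidableRel (G ℓ).Adj]

lemma degS_mono {S T : Finset V} (h : S ⊆ T) (ℓ : L) (v : V) : degS G S ℓ v ≤ degS G T ℓ v :=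
  card_le_card (filter_subset_filter _ h)

variable [Fintype L] {k lam : ℕ}

lemma card_filter_le_degS_le_of_subset {S T : Finset V} (h : S ⊆ T) (v : V) :
    #{ℓ | k ≤ degS G S ℓ v} ≤ #{ℓ | k ≤ degS G T ℓ v} :=
  card_le_card <| monotone_filter_right _ fun ℓ _ hℓ => hℓ.trans (degS_mono h ℓ v)

lemma FCProp.union [DecidableEq V] {S₁ S₂ : Finset V} (h₁ : FCProp G k lam S₁)
    (h₂ : FCProp G k lam S₂) : FCProp G k lam (S₁ ∪ S₂) := by
  intro v hv
  rcases mem_union.mp hv with hv | hv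
  · exact (h₁ v hv).trans (card_filter_le_degS_le_of_subset subset_union_left v)
  · exact (h₂ v hv).trans (card_filter_le_degS_le_of_subset subset_union_right v)

end

theorem firmcore_unique_general {V L : Type*} [Fintype L] (G : L → SimpleGraph V)
    [∀ ℓ, DecidableRel (G ℓ).Adj]
    (k lam : ℕ)
    (S₁ S₂ : Finset V)
    (h₁ : IsFirmCore G k lam S₁) (h₂ : IsFirmCore G k lam S₂) :
    S₁ = S₂ := by
  classical
  have hunion : FCProp G k lam (S₁ ∪ S₂) := h₁.1.union h₂.1
  calc S₁ = S₁ ∪ S₂ := (h₁.2 _ hunion subset_union_left).symm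
    _ = S₂ := h₂.2 _ hunion subset_union_right

/-- Uniqueness of the `(k,λ)`-FirmCore. -/
theorem firmcore_unique {V L : Type*} [Fintype L] (G : L → SimpleGraph V)
    [∀ ℓ, DecidableRel (G ℓ).Adj]
    (k lam : ℕ) (hlam : 1 ≤ lam) (hlamL : lam ≤ Fintype.card L)
    (S₁ S₂ : Finset V)
    (h₁ : IsFirmCore G k lam S₁) (h₂ : IsFirmCore G k lam S₂) :
    S₁ = S₂ :=
  firmcore_unique_general G k lam S₁ S₂ h₁ h₂
end

section
/- Density lower bound for FirmCores: let β > 0 be real, C a nonempty subset of V satisfying the (k,λ)-FirmCore property for integers k ≥ 0 and 1 ≤ λ ≤ |L|. Then ρ(C) ≥ (k / (2|L|)) · max over integers ξ with 0 ≤ ξ < λ of (λ − ξ)(ξ + 1)^β. -/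
open Finset

/-- Number of edges of the subgraph of layer `ℓ` induced by `S` (ordered pairs halved). -/
def edgeCount {V L : Type*} (G : L → SimpleGraph V) [∀ ℓ, DecidableRel (G ℓ).Adj]
    (ℓ : L) (S : Finset V) : ℕ :=
  ((S ×ˢ S).filter fun p : V × V => (G ℓ).Adj p.1 p.2).card / 2

/-- The multilayer density `ρ(S) = max_{∅ ≠ L̂ ⊆ L} (min_{ℓ ∈ L̂} |E_ℓ[S]|/|S|) · |L̂|^β`. -/
noncomputable def mlDensity {V L : Type*} (G : L → SimpleGraph V)
    [∀ ℓ, DecidableRel (G ℓ).Adj] (β : ℝ) (S : Finset V) : ℝ :=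
  sSup { x : ℝ | ∃ Lh : Finset L, Lh.Nonempty ∧
    x = sInf { y : ℝ | ∃ ℓ ∈ Lh, y = (edgeCount G ℓ S : ℝ) / (S.card : ℝ) } *
      (Lh.card : ℝ) ^ β }

/-!
Call a vertex of `C` *heavy* in layer `ℓ` if its degree there is at least `k`, and let `n_ℓ` be the
number of heavy vertices in layer `ℓ`. Every vertex is heavy in at least `λ` layers, so
`∑ n_ℓ ≥ λ |C|`; as `n_ℓ ≤ |C|`, for each `ξ < λ` at least `ξ + 1` layers have
`|L| n_ℓ ≥ (λ - ξ) |C|` (otherwise the sum would fall short). By the handshake lemma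
`2 |E_ℓ[C]| ≥ k n_ℓ`, so on a set `L̂` of `ξ + 1` such layers every `|E_ℓ[C]| / |C|` is at least
`k (λ - ξ) / (2 |L|)`, and `ρ(C)` is at least this times `(ξ + 1)^β`.
-/

theorem Finset.even_card_of_involution {α : Type*} (s : Finset α) (g : α → α)
    (hg_mem : ∀ a ∈ s, g a ∈ s) (hg_ne : ∀ a ∈ s, g a ≠ a) (hg_inv : ∀ a ∈ s, g (g a) = a) :
    Even #s := by
  rw [← ZMod.natCast_eq_zero_iff_even, card_eq_sum_ones, Nat.cast_sum, Nat.cast_one]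
  exact sum_involution (fun a _ => g a) (fun _ _ => by decide) (fun a ha _ => hg_ne a ha)
    hg_mem hg_inv

theorem Finset.lt_card_filter_of_le_sum {ι : Type*} (s : Finset ι) (f : ι → ℕ) {c ξ m : ℕ}
    (hf : ∀ i ∈ s, f i ≤ c) (hsum : (ξ + m) * c ≤ ∑ i ∈ s, f i) (hξ : ξ < #s) :
    ξ < #{i ∈ s | m * c ≤ #s * f i} := by
  by_contra! hT
  set N := #s
  set U := {i ∈ s | ¬ m * c ≤ N * f i}
  have hU : #{i ∈ s | m * c ≤ N * f i} + #U = N := card_filter_add_card_filter_not _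
  have hT_sum : ∑ i ∈ s with m * c ≤ N * f i, N * f i ≤ ξ * (N * c) :=
    (sum_le_card_nsmul _ _ _ fun i hi => Nat.mul_le_mul_left N (hf i (mem_filter.mp hi).1)).trans
      (Nat.mul_le_mul_right _ hT)
  have hU_sum : ∑ i ∈ U, N * f i + #U ≤ N * (m * c) := by
    have := sum_le_card_nsmul U (fun i => N * f i + 1) (m * c) fun i hi => by
      have := (mem_filter.mp hi).2; omega
    rw [sum_add_distrib, sum_const, smul_eq_mul, mul_one, smul_eq_mul] at this
    exact this.trans (Nat.mul_le_mul_right _ (by omega))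
  have hsplit : ∑ i ∈ s, N * f i = ∑ i ∈ s with m * c ≤ N * f i, N * f i + ∑ i ∈ U, N * f i :=
    (sum_filter_add_sum_filter_not _ _ _).symm
  have hN_sum : N * ((ξ + m) * c) ≤ ∑ i ∈ s, N * f i := by
    rw [← mul_sum]; exact Nat.mul_le_mul_left N hsum
  have : N * ((ξ + m) * c) = ξ * (N * c) + N * (m * c) := by ring
  omega

section Multilayer

variable {V L : Type*} (G : L → SimpleGraph V) [∀ ℓ, DecidableRel (G ℓ).Adj]

theorem two_mul_edgeCount (ℓ : L) (S : Finset V) :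
    2 * edgeCount G ℓ S = ∑ v ∈ S, degS G S ℓ v := by
  set P := (S ×ˢ S).filter fun p : V × V => (G ℓ).Adj p.1 p.2
  have hP : Even #P := P.even_card_of_involution Prod.swap
    (fun p hp => by simp_all [P, (G ℓ).adj_comm])
    (fun p hp h => (mem_filter.mp hp).2.ne (congrArg Prod.snd h)) (fun p _ => p.swap_swap)
  have hsum : #P = ∑ v ∈ S, degS G S ℓ v := by
    rw [card_filter, sum_product]
    exact sum_congr rfl fun v _ => (card_filter _ _).symm
  -- `edgeCount` halves with truncating division, hence the parity argument.
  rw [edgeCount, ← hsum, Nat.mul_div_cancel' (even_iff_two_dvd.mp hP)]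

theorem mul_card_filter_le_two_mul_edgeCount (k : ℕ) (ℓ : L) (S : Finset V) :
    k * #{v ∈ S | k ≤ degS G S ℓ v} ≤ 2 * edgeCount G ℓ S := by
  rw [two_mul_edgeCount, mul_comm, ← smul_eq_mul]
  calc #{v ∈ S | k ≤ degS G S ℓ v} • k ≤ ∑ v ∈ S with k ≤ degS G S ℓ v, degS G S ℓ v :=
        card_nsmul_le_sum _ _ _ fun v hv => (mem_filter.mp hv).2
    _ ≤ ∑ v ∈ S, degS G S ℓ v := sum_le_sum_of_subset (filter_subset _ _)

theorem FCProp.mul_card_le_sum_card_filter [Fintype L] {k lam : ℕ} {S : Finset V}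
    (h : FCProp G k lam S) :
    lam * #S ≤ ∑ ℓ, #{v ∈ S | k ≤ degS G S ℓ v} := by
  calc lam * #S = #S • lam := mul_comm _ _
    _ ≤ ∑ v ∈ S, #{ℓ | k ≤ degS G S ℓ v} := card_nsmul_le_sum _ _ _ h
    _ = _ := sum_card_bipartiteAbove_eq_sum_card_bipartiteBelow _

theorem le_mlDensity [Finite L] (β : ℝ) (S : Finset V) {Lh : Finset L} (hLh : Lh.Nonempty)
    {b : ℝ} (hb : ∀ ℓ ∈ Lh, b ≤ edgeCount G ℓ S / #S) :
    b * (#Lh : ℝ) ^ β ≤ mlDensity G β S := by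
  set value := fun Lh : Finset L =>
    sInf { y : ℝ | ∃ ℓ ∈ Lh, y = (edgeCount G ℓ S : ℝ) / (S.card : ℝ) } * (Lh.card : ℝ) ^ β
  have hbdd : BddAbove { x : ℝ | ∃ Lh : Finset L, Lh.Nonempty ∧ x = value Lh } :=
    ((Set.finite_range value).subset <| by rintro _ ⟨Lh, -, rfl⟩; exact ⟨Lh, rfl⟩).bddAbove
  refine le_trans ?_ (le_csSup hbdd ⟨Lh, hLh, rfl⟩)
  have hb_inf : b ≤ sInf { y : ℝ | ∃ ℓ ∈ Lh, y = (edgeCount G ℓ S : ℝ) / (S.card : ℝ) } := by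
    obtain ⟨ℓ, hℓ⟩ := hLh
    refine le_csInf ⟨_, ℓ, hℓ, rfl⟩ ?_
    rintro _ ⟨ℓ, hℓ, rfl⟩
    exact hb ℓ hℓ
  exact mul_le_mul_of_nonneg_right hb_inf (Real.rpow_nonneg (Nat.cast_nonneg _) β)

theorem div_le_edgeCount_div {k m N : ℕ} {ℓ : L} {S : Finset V} (hN : 0 < N) (hS : S.Nonempty)
    (h : m * #S ≤ N * #{v ∈ S | k ≤ degS G S ℓ v}) :
    (k * m : ℝ) / (2 * N) ≤ edgeCount G ℓ S / #S := by
  have hS_pos : (0 : ℝ) < #S := by exact_mod_cast hS.card_pos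
  rw [div_le_div_iff₀ (by positivity) hS_pos]
  have : k * m * #S ≤ edgeCount G ℓ S * (2 * N) :=
    calc k * m * #S = k * (m * #S) := mul_assoc _ _ _
      _ ≤ k * (N * #{v ∈ S | k ≤ degS G S ℓ v}) := Nat.mul_le_mul_left k h
      _ = N * (k * #{v ∈ S | k ≤ degS G S ℓ v}) := by ring
      _ ≤ N * (2 * edgeCount G ℓ S) :=
        Nat.mul_le_mul_left N (mul_card_filter_le_two_mul_edgeCount G k ℓ S)
      _ = edgeCount G ℓ S * (2 * N) := by ring
  exact_mod_cast this

end Multilayer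

/-- Density lower bound for FirmCores (Lemma 1):
`ρ(C) ≥ (k / 2|L|) · max_{0 ≤ ξ < λ} (λ - ξ)(ξ+1)^β`. -/
theorem firmcore_density_lb {V L : Type*} [Fintype L] (G : L → SimpleGraph V)
    [∀ ℓ, DecidableRel (G ℓ).Adj] (β : ℝ)
    (k lam : ℕ) (hlam : 1 ≤ lam) (hlamL : lam ≤ Fintype.card L)
    (C : Finset V) (hC : C.Nonempty) (h : FCProp G k lam C) :
    (k : ℝ) / (2 * (Fintype.card L : ℝ)) *
      ((Finset.range lam).sup' (Finset.nonempty_range_iff.mpr (by omega))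
        fun ξ : ℕ => ((lam : ℝ) - (ξ : ℝ)) * ((ξ : ℝ) + 1) ^ β) ≤
    mlDensity G β C := by
  obtain ⟨ξ, hξ, hmax⟩ := exists_mem_eq_sup' ⟨0, mem_range.mpr hlam⟩
    fun ξ : ℕ => ((lam : ℝ) - (ξ : ℝ)) * ((ξ : ℝ) + 1) ^ β
  rw [hmax]
  have hξ : ξ < lam := mem_range.mp hξ
  have hsum := h.mul_card_le_sum_card_filter
  rw [← Nat.add_sub_cancel' hξ.le] at hsum
  obtain ⟨Lh, hLh_sub, hLh_card⟩ := exists_subset_card_eq <| Nat.succ_le_of_lt <|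
    univ.lt_card_filter_of_le_sum _ (fun ℓ _ => card_filter_le _ _) hsum
      (by rw [card_univ]; omega)
  have hL : 0 < Fintype.card L := by omega
  have hb : ∀ ℓ ∈ Lh, (k * (lam - ξ : ℕ) : ℝ) / (2 * Fintype.card L) ≤ edgeCount G ℓ C / #C :=
    fun ℓ hℓ => div_le_edgeCount_div G hL hC <|
      card_univ (α := L) ▸ (mem_filter.mp (hLh_sub hℓ)).2
  calc _ = (k * (lam - ξ : ℕ) : ℝ) / (2 * Fintype.card L) * (#Lh : ℝ) ^ β := by
        rw [hLh_card, Nat.cast_sub hξ.le]; push_cast; ring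
    _ ≤ mlDensity G β C := le_mlDensity G β C (card_pos.mp (by omega)) hb
end

section
/- Upper bound on the optimal multilayer density: let β > 0 be real and suppose G has at least one edge in some layer. Let (S*_SL, ℓ*) maximize |E_ℓ[S]|/|S| over all nonempty S ⊆ V and ℓ ∈ L, and let μ* = min_{v∈S*_SL} deg^{S*_SL}_{ℓ*}(v). Then for every nonempty S ⊆ V, ρ(S) ≤ μ* · |L|^β. -/
open Finset

/-! Deleting a vertex `v` from the densest single-layer set `S*` removes exactly
`deg_{ℓ*}(v)` edges and cannot raise the density, which forces `|E_{ℓ*}[S*]| / |S*| ≤ μ*`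
when `v` has minimum degree. Every term `min_{ℓ ∈ L̂} |E_ℓ[S]| / |S| · |L̂|^β` of `ρ(S)` is then
at most `μ* · |L|^β`, as `β ≥ 0`. -/

section Density

variable {V L : Type*} (G : L → SimpleGraph V) [∀ ℓ, DecidableRel (G ℓ).Adj]

lemma card_adjPairs_eq_sum_degS (S : Finset V) (ℓ : L) :
    ((S ×ˢ S).filter fun p : V × V => (G ℓ).Adj p.1 p.2).card = ∑ v ∈ S, degS G S ℓ v := by
  simp only [degS, card_filter, sum_product]

section Erase

variable [DecidableEq V]

lemma degS_eq_degS_erase_add {S : Finset V} {v : V} (hv : v ∈ S) (ℓ : L) (a : V) :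
    degS G S ℓ a = degS G (S.erase v) ℓ a + if (G ℓ).Adj a v then 1 else 0 := by
  simp only [degS, card_filter]
  rw [← sum_erase_add S _ hv]

lemma sum_degS_eq_sum_degS_erase_add {S : Finset V} {v : V} (hv : v ∈ S) (ℓ : L) :
    ∑ a ∈ S, degS G S ℓ a = ∑ a ∈ S.erase v, degS G (S.erase v) ℓ a + 2 * degS G S ℓ v := by
  have hback : ∑ a ∈ S.erase v, (if (G ℓ).Adj a v then 1 else 0) = degS G S ℓ v := by
    rw [sum_erase S (by simp), degS, card_filter]
    simp only [SimpleGraph.adj_comm]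
  rw [← add_sum_erase S _ hv, sum_congr rfl fun a _ => degS_eq_degS_erase_add G hv ℓ a,
    sum_add_distrib, hback]
  ring

lemma edgeCount_eq_edgeCount_erase_add {S : Finset V} {v : V} (hv : v ∈ S) (ℓ : L) :
    edgeCount G ℓ S = edgeCount G ℓ (S.erase v) + degS G S ℓ v := by
  simp only [edgeCount, card_adjPairs_eq_sum_degS, sum_degS_eq_sum_degS_erase_add G hv]
  omega

lemma edgeCount_div_card_le_degS_of_isDensest {S : Finset V} {ℓ : L}
    (hmax : ∀ T : Finset V, T.Nonempty →
      (edgeCount G ℓ T : ℝ) / T.card ≤ (edgeCount G ℓ S : ℝ) / S.card)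
    {v : V} (hv : v ∈ S) :
    (edgeCount G ℓ S : ℝ) / S.card ≤ degS G S ℓ v := by
  have hS : (0 : ℝ) < S.card := by exact_mod_cast card_pos.mpr ⟨v, hv⟩
  have hcard : ((S.erase v).card : ℝ) = S.card - 1 := cast_card_erase_of_mem hv
  have herase : (edgeCount G ℓ (S.erase v) : ℝ) * S.card ≤ edgeCount G ℓ S * (S.card - 1) := by
    rcases (S.erase v).eq_empty_or_nonempty with hempty | hne
    · rw [← hcard, hempty]
      simp [edgeCount]
    · have hpos : (0 : ℝ) < (S.erase v).card := by exact_mod_cast card_pos.mpr hne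
      rw [← hcard, ← div_le_div_iff₀ hpos hS]
      exact hmax _ hne
  have hsplit : (edgeCount G ℓ S : ℝ) = edgeCount G ℓ (S.erase v) + degS G S ℓ v := by
    exact_mod_cast edgeCount_eq_edgeCount_erase_add G hv ℓ
  rw [div_le_iff₀ hS]
  nlinarith

end Erase

lemma mlDensity_le_mul_rpow [Fintype L] {β : ℝ} (hβ : 0 ≤ β) {S : Finset V} {c : ℝ}
    (hc : 0 ≤ c) (hS : ∀ ℓ, (edgeCount G ℓ S : ℝ) / S.card ≤ c) :
    mlDensity G β S ≤ c * (Fintype.card L : ℝ) ^ β := by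
  refine Real.sSup_le ?_ (by positivity)
  rintro x ⟨Lh, ⟨ℓ, hℓ⟩, rfl⟩
  have hinf : sInf { y : ℝ | ∃ ℓ ∈ Lh, y = (edgeCount G ℓ S : ℝ) / S.card } ≤ c := by
    refine csInf_le_of_le ⟨0, ?_⟩ ⟨ℓ, hℓ, rfl⟩ (hS ℓ)
    rintro y ⟨ℓ', -, rfl⟩
    positivity
  have hcard : (Lh.card : ℝ) ^ β ≤ (Fintype.card L : ℝ) ^ β :=
    Real.rpow_le_rpow (by positivity) (by exact_mod_cast card_le_univ Lh) hβ
  exact mul_le_mul hinf hcard (by positivity) hc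

end Density

theorem ml_density_ub_general {V L : Type*} [Fintype L] (G : L → SimpleGraph V)
    [∀ ℓ, DecidableRel (G ℓ).Adj] (β : ℝ) (hβ : 0 < β)
    (Ssl : Finset V) (hSsl : Ssl.Nonempty) (ℓstar : L)
    (hmax : ∀ S : Finset V, S.Nonempty → ∀ ℓ : L,
      (edgeCount G ℓ S : ℝ) / (S.card : ℝ) ≤
        (edgeCount G ℓstar Ssl : ℝ) / (Ssl.card : ℝ))
    (μ : ℕ) (hμ : μ = Ssl.inf' hSsl fun v => degS G Ssl ℓstar v) :
    ∀ S : Finset V, S.Nonempty →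
      mlDensity G β S ≤ (μ : ℝ) * (Fintype.card L : ℝ) ^ β := by
  classical
  intro S hS
  obtain ⟨v, hv, hμv⟩ := exists_mem_eq_inf' hSsl fun v => degS G Ssl ℓstar v
  have hdensest : (edgeCount G ℓstar Ssl : ℝ) / Ssl.card ≤ μ := by
    rw [hμ, hμv]
    exact edgeCount_div_card_le_degS_of_isDensest G (fun T hT => hmax T hT ℓstar) hv
  exact mlDensity_le_mul_rpow G hβ.le μ.cast_nonneg fun ℓ => (hmax S hS ℓ).trans hdensest

/-- Lemma 3: upper bound on the optimal multilayer density,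
`ρ(S) ≤ μ(S*_SL, ℓ*) · |L|^β` for every nonempty `S`. -/
theorem ml_density_ub {V L : Type*} [Fintype L] (G : L → SimpleGraph V)
    [∀ ℓ, DecidableRel (G ℓ).Adj] (β : ℝ) (hβ : 0 < β)
    (hedge : ∃ (ℓ : L) (v u : V), (G ℓ).Adj v u)
    (Ssl : Finset V) (hSsl : Ssl.Nonempty) (ℓstar : L)
    (hmax : ∀ S : Finset V, S.Nonempty → ∀ ℓ : L,
      (edgeCount G ℓ S : ℝ) / (S.card : ℝ) ≤
        (edgeCount G ℓstar Ssl : ℝ) / (Ssl.card : ℝ))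
    (μ : ℕ) (hμ : μ = Ssl.inf' hSsl fun v => degS G Ssl ℓstar v) :
    ∀ S : Finset V, S.Nonempty →
      mlDensity G β S ≤ (μ : ℝ) * (Fintype.card L : ℝ) ^ β :=
  ml_density_ub_general G β hβ Ssl hSsl ℓstar hmax μ hμ
end

section
/- Single-layer directed [x,y]-core bound on directed density: let G = (V,E) be a finite directed graph with at least one edge. For integers x,y ≥ 0, an [x,y]-core is a pair (S,T) of subsets of V (not necessarily disjoint) such that every v∈S has at least x out-neighbors in T and every u∈T has at least y in-neighbors in S. Let (x*,y*) maximize x·y over all pairs (x,y) admitting an [x,y]-core with S and T nonempty, and let (S*,T*) maximize |E(S,T)|/√(|S||T|) over all nonempty S,T ⊆ V, where E(S,T) = {(v,u)∈E : v∈S, u∈T}. Then 2√(x*·y*) ≥ |E(S*,T*)|/√(|S*||T*|). -/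
/-
Let `E = |E(S*,T*)|`, `s = |S*|`, `t = |T*|`. Deleting a vertex `v` of `S*` with `d`
out-neighbours in `T*` cannot increase the density, so `E - d ≤ E √(1 - 1/s) ≤ E (1 - 1/(2s))`,
i.e. `d ≥ E/(2s)`; applied to the reversed digraph, every vertex of `T*` has at least `E/(2t)`
in-neighbours in `S*`. Hence `(S*,T*)` is an `[⌈E/2s⌉, ⌈E/2t⌉]`-core, and `x* y* ≥ E²/(4st)`.
-/

open Finset

/-- Number of edges of the digraph `D` going from `S` to `T`. -/
def dEdge1 {V : Type*} (D : V → V → Prop) [DecidableRel D] (S T : Finset V) : ℕ :=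
  ((S ×ˢ T).filter fun p : V × V => D p.1 p.2).card

/-- `(S,T)` is an `[x,y]`-core: every `v ∈ S` has at least `x` out-neighbors in `T`,
and every `u ∈ T` has at least `y` in-neighbors in `S`. -/
def XYCore {V : Type*} (D : V → V → Prop) [DecidableRel D]
    (x y : ℕ) (S T : Finset V) : Prop :=
  (∀ v ∈ S, x ≤ (T.filter fun u => D v u).card) ∧
  (∀ u ∈ T, y ≤ (S.filter fun v => D v u).card)

lemma le_of_sub_mul_sqrt_le_mul_sqrt {E d s c : ℝ} (hE : 0 ≤ E) (hs : 1 ≤ s) (hc : 0 < c)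
    (h : (E - d) * √(s * c) ≤ E * √((s - 1) * c)) : E / (2 * s) ≤ d := by
  have hsc : 0 < √(s * c) := Real.sqrt_pos.2 (by positivity)
  have hroot : √((s - 1) * c) ≤ (1 - 1 / (2 * s)) * √(s * c) := by
    have hfactor : 0 ≤ 1 - 1 / (2 * s) := by
      rw [sub_nonneg, div_le_one (by positivity)]; linarith
    rw [Real.sqrt_le_left (by positivity), mul_pow, Real.sq_sqrt (by positivity)]
    have hsquare : (1 - 1 / (2 * s)) ^ 2 * (s * c) = (s - 1) * c + c / (4 * s) := by
      field_simp; ring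
    rw [hsquare]
    linarith [div_pos hc (by positivity : (0 : ℝ) < 4 * s)]
  have hdiff : E - d ≤ E * (1 - 1 / (2 * s)) :=
    le_of_mul_le_mul_right (h.trans (by nlinarith [mul_le_mul_of_nonneg_left hroot hE])) hsc
  have hEs : E * (1 - 1 / (2 * s)) = E - E / (2 * s) := by ring
  linarith

section Digraph

variable {V : Type*} (D : V → V → Prop) [DecidableRel D]

noncomputable def dirDensity (S T : Finset V) : ℝ :=
  (dEdge1 D S T : ℝ) / Real.sqrt ((S.card : ℝ) * (T.card : ℝ))

lemma dEdge1_eq_sum_left (S T : Finset V) :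
    dEdge1 D S T = ∑ v ∈ S, (T.filter fun u => D v u).card := by
  simp only [dEdge1, card_filter, sum_product]

lemma dEdge1_eq_sum_right (S T : Finset V) :
    dEdge1 D S T = ∑ u ∈ T, (S.filter fun v => D v u).card := by
  simp only [dEdge1, card_filter, sum_product_right]

lemma dEdge1_swap (S T : Finset V) : dEdge1 (fun u v => D v u) T S = dEdge1 D S T := by
  rw [dEdge1_eq_sum_left, dEdge1_eq_sum_right]

lemma dirDensity_swap (S T : Finset V) :
    dirDensity (fun u v => D v u) T S = dirDensity D S T := by
  rw [dirDensity, dirDensity, dEdge1_swap, mul_comm]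

@[simp]
lemma dEdge1_empty_left (T : Finset V) : dEdge1 D ∅ T = 0 := by
  simp [dEdge1]

lemma dEdge1_erase_left [DecidableEq V] {S : Finset V} (T : Finset V) {v : V} (hv : v ∈ S) :
    dEdge1 D S T = (T.filter fun u => D v u).card + dEdge1 D (S.erase v) T := by
  rw [dEdge1_eq_sum_left, dEdge1_eq_sum_left,
    add_sum_erase S (fun w => (T.filter fun u => D w u).card) hv]

lemma div_le_card_out_of_dirDensity_maximal {S T : Finset V} (hT : T.Nonempty)
    (hmax : ∀ S' : Finset V, S'.Nonempty → dirDensity D S' T ≤ dirDensity D S T)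
    {v : V} (hv : v ∈ S) :
    (dEdge1 D S T : ℝ) / (2 * S.card) ≤ (T.filter fun u => D v u).card := by
  classical
  have hS : (1 : ℝ) ≤ S.card := Nat.one_le_cast.2 (card_pos.2 ⟨v, hv⟩)
  refine le_of_sub_mul_sqrt_le_mul_sqrt (Nat.cast_nonneg _) hS
    (Nat.cast_pos.2 (card_pos.2 hT)) ?_
  have hrest : (dEdge1 D S T : ℝ) - (T.filter fun u => D v u).card = dEdge1 D (S.erase v) T := by
    rw [dEdge1_erase_left D T hv]; push_cast; ring
  have hcard : (S.card : ℝ) - 1 = (S.erase v).card := by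
    rw [card_erase_of_mem hv, Nat.cast_sub (card_pos.2 ⟨v, hv⟩), Nat.cast_one]
  rw [hrest, hcard]
  rcases (S.erase v).eq_empty_or_nonempty with hempty | hne
  · rw [hempty, dEdge1_empty_left, Nat.cast_zero, zero_mul]
    positivity
  · exact (div_le_div_iff₀ (Real.sqrt_pos.2 (by positivity))
      (Real.sqrt_pos.2 (by positivity))).1 (hmax _ hne)

lemma div_le_card_in_of_dirDensity_maximal {S T : Finset V} (hS : S.Nonempty)
    (hmax : ∀ T' : Finset V, T'.Nonempty → dirDensity D S T' ≤ dirDensity D S T)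
    {u : V} (hu : u ∈ T) :
    (dEdge1 D S T : ℝ) / (2 * T.card) ≤ (S.filter fun v => D v u).card := by
  have := div_le_card_out_of_dirDensity_maximal (fun u v => D v u) hS
    (fun T' hT' => by simpa only [dirDensity_swap] using hmax T' hT') hu
  rwa [dEdge1_swap] at this

lemma xyCore_of_dirDensity_maximal {S T : Finset V} (hS : S.Nonempty) (hT : T.Nonempty)
    (hmax : ∀ S' T' : Finset V, S'.Nonempty → T'.Nonempty →
      dirDensity D S' T' ≤ dirDensity D S T) :
    XYCore D ⌈(dEdge1 D S T : ℝ) / (2 * S.card)⌉₊ ⌈(dEdge1 D S T : ℝ) / (2 * T.card)⌉₊ S T :=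
  ⟨fun _ hv => Nat.ceil_le.2 <|
      div_le_card_out_of_dirDensity_maximal D hT (fun S' hS' => hmax S' T hS' hT) hv,
    fun _ hu => Nat.ceil_le.2 <|
      div_le_card_in_of_dirDensity_maximal D hS (fun T' hT' => hmax S T' hS hT') hu⟩

end Digraph

lemma div_sqrt_mul_le_two_sqrt {E s t x y : ℝ} (hE : 0 ≤ E) (hs : 0 < s) (ht : 0 < t)
    (hx : E / (2 * s) ≤ x) (hy : E / (2 * t) ≤ y) : E / √(s * t) ≤ 2 * √(x * y) := by
  have hprod : E ^ 2 / (s * t) = 4 * (E / (2 * s) * (E / (2 * t))) := by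
    field_simp; ring
  have hsq : (E / √(s * t)) ^ 2 ≤ 4 * (x * y) := by
    rw [div_pow, Real.sq_sqrt (by positivity), hprod]
    have hx0 : 0 ≤ x := (div_nonneg hE (by positivity)).trans hx
    gcongr
  calc E / √(s * t) ≤ √(4 * (x * y)) := Real.le_sqrt_of_sq_le hsq
    _ = 2 * √(x * y) := by
      rw [Real.sqrt_mul (by norm_num), show (4 : ℝ) = 2 ^ 2 by norm_num,
        Real.sqrt_sq (by norm_num)]

theorem xy_core_density_bound_general {V : Type*} (D : V → V → Prop) [DecidableRel D]
    (xs ys : ℕ)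
    (hmaxxy : ∀ (x y : ℕ) (S T : Finset V), S.Nonempty → T.Nonempty →
      XYCore D x y S T → x * y ≤ xs * ys)
    (Sstar Tstar : Finset V) (hSstar : Sstar.Nonempty) (hTstar : Tstar.Nonempty)
    (hmaxd : ∀ S T : Finset V, S.Nonempty → T.Nonempty →
      (dEdge1 D S T : ℝ) / Real.sqrt ((S.card : ℝ) * (T.card : ℝ)) ≤
        (dEdge1 D Sstar Tstar : ℝ) /
          Real.sqrt ((Sstar.card : ℝ) * (Tstar.card : ℝ))) :
    (dEdge1 D Sstar Tstar : ℝ) / Real.sqrt ((Sstar.card : ℝ) * (Tstar.card : ℝ)) ≤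
      2 * Real.sqrt ((xs : ℝ) * (ys : ℝ)) := by
  set X := ⌈(dEdge1 D Sstar Tstar : ℝ) / (2 * Sstar.card)⌉₊
  set Y := ⌈(dEdge1 D Sstar Tstar : ℝ) / (2 * Tstar.card)⌉₊
  have hXY : (X : ℝ) * Y ≤ xs * ys := by
    exact_mod_cast hmaxxy X Y _ _ hSstar hTstar (xyCore_of_dirDensity_maximal D hSstar hTstar hmaxd)
  calc _ ≤ 2 * √((X : ℝ) * Y) :=
        div_sqrt_mul_le_two_sqrt (Nat.cast_nonneg _) (Nat.cast_pos.2 (card_pos.2 hSstar))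
          (Nat.cast_pos.2 (card_pos.2 hTstar)) (Nat.le_ceil _) (Nat.le_ceil _)
    _ ≤ 2 * √((xs : ℝ) * ys) := by gcongr

/-- If `(x*, y*)` is the maximum cn-pair of a directed graph and `(S*, T*)` its densest
directed subgraph, then `2√(x*·y*) ≥ |E(S*,T*)|/√(|S*||T*|)`. -/
theorem xy_core_density_bound {V : Type*} (D : V → V → Prop) [DecidableRel D]
    (hedge : ∃ v u, D v u)
    (xs ys : ℕ)
    (hex : ∃ S T : Finset V, S.Nonempty ∧ T.Nonempty ∧ XYCore D xs ys S T)
    (hmaxxy : ∀ (x y : ℕ) (S T : Finset V), S.Nonempty → T.Nonempty →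
      XYCore D x y S T → x * y ≤ xs * ys)
    (Sstar Tstar : Finset V) (hSstar : Sstar.Nonempty) (hTstar : Tstar.Nonempty)
    (hmaxd : ∀ S T : Finset V, S.Nonempty → T.Nonempty →
      (dEdge1 D S T : ℝ) / Real.sqrt ((S.card : ℝ) * (T.card : ℝ)) ≤
        (dEdge1 D Sstar Tstar : ℝ) /
          Real.sqrt ((Sstar.card : ℝ) * (Tstar.card : ℝ))) :
    (dEdge1 D Sstar Tstar : ℝ) / Real.sqrt ((Sstar.card : ℝ) * (Tstar.card : ℝ)) ≤
      2 * Real.sqrt ((xs : ℝ) * (ys : ℝ)) :=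
  xy_core_density_bound_general D xs ys hmaxxy Sstar Tstar hSstar hTstar hmaxd
end

section
/- FirmCore solves the BFF-MM problem exactly: let k_max be the largest integer k such that some nonempty set S ⊆ V satisfies the (k,|L|)-FirmCore property, and let C be the (k_max,|L|)-FirmCore of G. Then min_{ℓ∈L} min_{v∈C} deg^C_ℓ(v) = k_max, and for every nonempty S ⊆ V, min_{ℓ∈L} min_{v∈S} deg^S_ℓ(v) ≤ k_max; i.e., C maximizes min_{ℓ∈L} μ(S,ℓ) over all nonempty S ⊆ V, where μ(S,ℓ) = min_{v∈S} deg^S_ℓ(v). -/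
open Finset

/-- The BFF-MM objective `min_{ℓ ∈ L} μ(S, ℓ)`. -/
def minLayerDegree {V L : Type*} [Fintype L] [Nonempty L] (G : L → SimpleGraph V)
    [∀ ℓ, DecidableRel (G ℓ).Adj] (S : Finset V) (hS : S.Nonempty) : ℕ :=
  univ.inf' univ_nonempty fun ℓ : L => S.inf' hS fun v => degS G S ℓ v

section

variable {V L : Type*} [Fintype L] (G : L → SimpleGraph V) [∀ ℓ, DecidableRel (G ℓ).Adj]

theorem fcProp_card_iff (k : ℕ) (S : Finset V) :
    FCProp G k (Fintype.card L) S ↔ ∀ v ∈ S, ∀ ℓ, k ≤ degS G S ℓ v := by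
  refine forall₂_congr fun v _ => ?_
  rw [← card_univ, (card_filter_le _ _).ge_iff_eq, card_filter_eq_iff]
  simp only [mem_univ, true_implies]

theorem le_minLayerDegree_iff [Nonempty L] (k : ℕ) (S : Finset V) (hS : S.Nonempty) :
    k ≤ minLayerDegree G S hS ↔ FCProp G k (Fintype.card L) S := by
  rw [fcProp_card_iff, minLayerDegree, le_inf'_iff]
  simp only [mem_univ, true_implies, le_inf'_iff]
  exact ⟨fun h v hv ℓ => h ℓ v hv, fun h ℓ v hv => h v hv ℓ⟩

end

theorem firmcore_solves_bff_general {V L : Type*} [Fintype L] [Nonempty L]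
    (G : L → SimpleGraph V) [∀ ℓ, DecidableRel (G ℓ).Adj]
    (kmax : ℕ)
    (hk_max : ∀ (k : ℕ) (S : Finset V), S.Nonempty →
      FCProp G k (Fintype.card L) S → k ≤ kmax)
    (C : Finset V) (hC : IsFirmCore G kmax (Fintype.card L) C)
    (hCne : C.Nonempty) :
    (univ.inf' univ_nonempty fun ℓ : L => C.inf' hCne fun v => degS G C ℓ v) = kmax ∧
    ∀ (S : Finset V) (hS : S.Nonempty),
      (univ.inf' univ_nonempty fun ℓ : L => S.inf' hS fun v => degS G S ℓ v) ≤ kmax := by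
  have objective_le (S : Finset V) (hS : S.Nonempty) : minLayerDegree G S hS ≤ kmax :=
    hk_max _ S hS ((le_minLayerDegree_iff G _ S hS).1 le_rfl)
  exact ⟨(objective_le C hCne).antisymm ((le_minLayerDegree_iff G _ C hCne).2 hC.1),
    objective_le⟩

/-- FirmCore solves the BFF-MM problem exactly: the `(k_max, |L|)`-FirmCore `C`
attains objective value `min_{ℓ ∈ L} min_{v ∈ C} deg^C_ℓ(v) = k_max`, and every
nonempty `S ⊆ V` has objective value at most `k_max`. -/
theorem firmcore_solves_bff {V L : Type*} [Fintype L] [Nonempty L]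
    (G : L → SimpleGraph V) [∀ ℓ, DecidableRel (G ℓ).Adj]
    (kmax : ℕ)
    (hk_ex : ∃ S : Finset V, S.Nonempty ∧ FCProp G kmax (Fintype.card L) S)
    (hk_max : ∀ (k : ℕ) (S : Finset V), S.Nonempty →
      FCProp G k (Fintype.card L) S → k ≤ kmax)
    (C : Finset V) (hC : IsFirmCore G kmax (Fintype.card L) C)
    (hCne : C.Nonempty) :
    (univ.inf' univ_nonempty fun ℓ : L => C.inf' hCne fun v => degS G C ℓ v) = kmax ∧
    ∀ (S : Finset V) (hS : S.Nonempty),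
      (univ.inf' univ_nonempty fun ℓ : L => S.inf' hS fun v => degS G S ℓ v) ≤ kmax :=
  firmcore_solves_bff_general G kmax hk_max C hC hCne
end
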